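/- Let T > 0, let F₁ be a reflection kernel with bounded parameters (γ₁, k₁) and F₂ a reflection kernel with bounded parameters (γ₂, k₂), and let X¹, X² ∈ D_T(L1). Then: (i) ‖Ψ_{F₂}(X²) − Ψ_{F₁}(X¹)‖_{T,1} ≤ (k₂/(1−γ₂)) ‖X² − X¹‖_{T,1} + (k₁ k₂ / ((1−γ₁)(1−γ₂))) ‖X¹‖_{T,1} ‖F₂ − F₁‖_op; and (ii) ‖Φ_{F₂}(X²) − Φ_{F₁}(X¹)‖_{T,1} ≤ (1 + 2k₂/(1−γ₂)) ‖X² − X¹‖_{T,1} + (2k₁k₂/((1−γ₁)(1−γ₂)) + k₁/(1−γ₁)) ‖X¹‖_{T,1} ‖F₂ − F₁‖_op, where F₂ − F₁ denotes the kernel (u,v) ↦ F₂(u,v) − F₁(u,v). -/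

import Mathlib

open MeasureTheory Set Filter
open scoped ENNReal NNReal

noncomputable section

/-- Operator norm of a kernel: `‖F‖_op = sup_{v ∈ [0,1]} ∫₀¹ |F(u,v)| du`. -/
def kernelOpNorm (F : ℝ → ℝ → ℝ) : ℝ≥0∞ :=
  ⨆ v ∈ Icc (0:ℝ) 1, ∫⁻ u in Icc (0:ℝ) 1, ENNReal.ofReal |F u v|

/-- Composition of kernels. -/
def kernelComp (F G : ℝ → ℝ → ℝ) : ℝ → ℝ → ℝ :=
  fun u v => ∫ w in Icc (0:ℝ) 1, F u w * G w v

/-- `kernelIter F (n-1)` is the `n`-fold composition `F^(n)`; so `kernelIter F 0 = F^(1) = F`. -/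
def kernelIter (F : ℝ → ℝ → ℝ) : ℕ → ℝ → ℝ → ℝ
  | 0 => F
  | n + 1 => kernelComp F (kernelIter F n)

/-- Spatial action of a kernel on `f : [0,1] × [0,T] → ℝ`. -/
def kernelApply (F f : ℝ → ℝ → ℝ) : ℝ → ℝ → ℝ :=
  fun u t => ∫ v in Icc (0:ℝ) 1, F u v * f v t

/-- `sup_{0 ≤ t ≤ T} |f_u(t)|`, valued in `ℝ≥0∞`. -/
def pathSup (T : ℝ) (f : ℝ → ℝ → ℝ) (u : ℝ) : ℝ≥0∞ :=
  ⨆ t ∈ Icc (0:ℝ) T, ENNReal.ofReal |f u t|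

/-- `‖f‖_{T,1} = ∫₀¹ sup_{0 ≤ t ≤ T} |f_u(t)| du`, valued in `ℝ≥0∞`. -/
def TNorm (T : ℝ) (f : ℝ → ℝ → ℝ) : ℝ≥0∞ :=
  ∫⁻ u in Icc (0:ℝ) 1, pathSup T f u

/-- `f ∈ D_T(L1)`. -/
structure MemDT (T : ℝ) (f : ℝ → ℝ → ℝ) : Prop where
  rightCont : ∀ u ∈ Icc (0:ℝ) 1, ∀ t ∈ Ico (0:ℝ) T, ContinuousWithinAt (f u) (Ici t) t
  leftLim : ∀ u ∈ Icc (0:ℝ) 1, ∀ t ∈ Ioc (0:ℝ) T,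
    ∃ L : ℝ, Tendsto (f u) (nhdsWithin t (Iio t)) (nhds L)
  meas : ∀ t ∈ Icc (0:ℝ) T, Measurable fun u => f u t
  finite : TNorm T f ≠ ⊤

/-- `f ∈ D_T^↑(L1)`. -/
structure MemDTup (T : ℝ) (f : ℝ → ℝ → ℝ) : Prop where
  memDT : MemDT T f
  nonneg_zero : ∀ u ∈ Icc (0:ℝ) 1, 0 ≤ f u 0
  mono : ∀ u ∈ Icc (0:ℝ) 1, MonotoneOn (f u) (Icc (0:ℝ) T)

/-- `F` is a reflection kernel with bounded parameters `(γ, k)`. -/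
structure IsReflKernel (F : ℝ → ℝ → ℝ) (γ : ℝ) (k : ℕ) : Prop where
  meas : Measurable (Function.uncurry F)
  nonneg : ∀ u ∈ Icc (0:ℝ) 1, ∀ v ∈ Icc (0:ℝ) 1, 0 ≤ F u v
  opNorm_le_one : kernelOpNorm F ≤ 1
  gamma_mem : γ ∈ Set.Ioo (0:ℝ) 1
  k_pos : 1 ≤ k
  iter_le : kernelOpNorm (kernelIter F (k - 1)) ≤ ENNReal.ofReal γ

/-- The map `π_{X,F}`: `π_{X,F}(W)_u(t) = sup_{0 ≤ s ≤ t} max(−X_u(s) + (F W)_u(s), 0)`. -/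
def piMap (X F W : ℝ → ℝ → ℝ) : ℝ → ℝ → ℝ :=
  fun u t => ⨆ s : Icc (0:ℝ) t, max (-(X u s.1) + kernelApply F W u s.1) 0

end

noncomputable section

/-- `Y = Ψ_F(X)`: `Y` is the (unique) fixed point of `π_{X,F}` in `D_T^↑(L1)`. -/
def IsRegulator (T : ℝ) (X F Y : ℝ → ℝ → ℝ) : Prop :=
  MemDTup T Y ∧ ∀ u ∈ Icc (0:ℝ) 1, ∀ t ∈ Icc (0:ℝ) T, Y u t = piMap X F Y u t

end

/-!
Write `p_f(u) = sup_{t ≤ T} |f_u(t)|`. The fixed-point equation gives `p_Y ≤ p_X + |F| p_Y`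
pointwise, and for two systems
`p_{Y²-Y¹} ≤ p_{X²-X¹} + |F₂ - F₁| p_{Y¹} + |F₂| p_{Y²-Y¹}`, because
`g ↦ sup_{r ≤ s} max(g(r), 0)` is 1-Lipschitz for the uniform norm (the kernel terms being
finite for a.e. `u`). Iterating `d ≤ a + |F| d` `k` times and integrating in `u` gives
`∫ d ≤ k ∫ a + ‖F^(k)‖_op ∫ d ≤ k ∫ a + γ ∫ d`, hence `∫ d ≤ k/(1-γ) ∫ a`; this yields
`‖Ψ(X¹)‖ ≤ k₁/(1-γ₁) ‖X¹‖` and then (i). The estimate (ii) for `Φ` is the triangle inequality.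
-/

local notation "𝕀" => Icc (0:ℝ) 1

noncomputable def absKernelApply (F : ℝ → ℝ → ℝ) (g : ℝ → ℝ≥0∞) (u : ℝ) : ℝ≥0∞ :=
  ∫⁻ v in 𝕀, ENNReal.ofReal |F u v| * g v

/-- The `n + 1`-fold composition of `|F|`, indexed like `kernelIter`. -/
noncomputable def absKernelIter (F : ℝ → ℝ → ℝ) : ℕ → ℝ → ℝ → ℝ≥0∞
  | 0 => fun u v => ENNReal.ofReal |F u v|
  | n + 1 => fun u v => absKernelApply F (absKernelIter F n · v) u

lemma ENNReal.ofReal_abs_add_le (a b : ℝ) :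
    ENNReal.ofReal |a + b| ≤ ENNReal.ofReal |a| + ENNReal.ofReal |b| :=
  (ENNReal.ofReal_le_ofReal (abs_add_le a b)).trans ENNReal.ofReal_add_le

lemma ENNReal.le_ofReal_div_one_sub_mul_of_le {D A : ℝ≥0∞} {c γ : ℝ} (hγ₀ : 0 ≤ γ)
    (hγ₁ : γ < 1) (hD : D ≠ ⊤) (h : D ≤ ENNReal.ofReal c * A + ENNReal.ofReal γ * D) :
    D ≤ ENNReal.ofReal (c / (1 - γ)) * A := by
  have hδ : 0 < 1 - γ := sub_pos.2 hγ₁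
  have hδD : ENNReal.ofReal (1 - γ) * D ≤ ENNReal.ofReal c * A := by
    rw [ENNReal.ofReal_sub _ hγ₀, ENNReal.ofReal_one, ENNReal.sub_mul fun _ _ => hD, one_mul]
    exact tsub_le_iff_right.2 h
  calc D = (ENNReal.ofReal (1 - γ))⁻¹ * (ENNReal.ofReal (1 - γ) * D) := by
        rw [← mul_assoc, ENNReal.inv_mul_cancel (ENNReal.ofReal_pos.2 hδ).ne'
          ENNReal.ofReal_ne_top, one_mul]
    _ ≤ (ENNReal.ofReal (1 - γ))⁻¹ * (ENNReal.ofReal c * A) := by gcongr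
    _ = ENNReal.ofReal (c / (1 - γ)) * A := by
        rw [← mul_assoc, ← ENNReal.ofReal_inv_of_pos hδ,
          ← ENNReal.ofReal_mul (inv_nonneg.2 hδ.le), div_eq_inv_mul]

section AbsKernel

variable {F : ℝ → ℝ → ℝ}

lemma lintegral_abs_le_kernelOpNorm {v : ℝ} (hv : v ∈ 𝕀) :
    ∫⁻ u in 𝕀, ENNReal.ofReal |F u v| ≤ kernelOpNorm F :=
  le_biSup (fun v => ∫⁻ u in 𝕀, ENNReal.ofReal |F u v|) hv

lemma absKernelApply_congr_ae {g h : ℝ → ℝ≥0∞} (hgh : g =ᵐ[volume.restrict 𝕀] h) :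
    absKernelApply F g = absKernelApply F h :=
  funext fun _ => lintegral_congr_ae (hgh.mono fun v hv => by simp only [hv])

lemma absKernelApply_mono_ae {g h : ℝ → ℝ≥0∞} (hgh : g ≤ᵐ[volume.restrict 𝕀] h) :
    absKernelApply F g ≤ absKernelApply F h :=
  fun _ => lintegral_mono_ae (hgh.mono fun v hv => by gcongr)

lemma absKernelApply_add (hF : Measurable (Function.uncurry F)) {g : ℝ → ℝ≥0∞}
    (hg : AEMeasurable g (volume.restrict 𝕀)) (h : ℝ → ℝ≥0∞) :
    absKernelApply F (g + h) = absKernelApply F g + absKernelApply F h := by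
  funext u
  simp only [absKernelApply, Pi.add_apply, mul_add]
  exact lintegral_add_left'
    ((hF.comp measurable_prodMk_left).abs.ennreal_ofReal.aemeasurable.mul hg) _

lemma measurable_absKernelApply (hF : Measurable (Function.uncurry F)) {g : ℝ → ℝ≥0∞}
    (hg : AEMeasurable g (volume.restrict 𝕀)) : Measurable (absKernelApply F g) := by
  rw [absKernelApply_congr_ae hg.ae_eq_mk]
  exact (hF.abs.ennreal_ofReal.mul (hg.measurable_mk.comp measurable_snd)).lintegral_prod_right'

lemma lintegral_absKernelApply_le (hF : Measurable (Function.uncurry F)) {g : ℝ → ℝ≥0∞}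
    (hg : AEMeasurable g (volume.restrict 𝕀)) :
    ∫⁻ u in 𝕀, absKernelApply F g u ≤ kernelOpNorm F * ∫⁻ v in 𝕀, g v := by
  rw [absKernelApply_congr_ae hg.ae_eq_mk, lintegral_congr_ae hg.ae_eq_mk]
  have hg' := hg.measurable_mk
  calc ∫⁻ u in 𝕀, absKernelApply F (hg.mk g) u
      = ∫⁻ v in 𝕀, (∫⁻ u in 𝕀, ENNReal.ofReal |F u v|) * hg.mk g v := by
        unfold absKernelApply
        rw [lintegral_lintegral_swap
          (hF.abs.ennreal_ofReal.mul (hg'.comp measurable_snd)).aemeasurable]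
        exact lintegral_congr fun v =>
          lintegral_mul_const _ (hF.comp measurable_prodMk_right).abs.ennreal_ofReal
    _ ≤ ∫⁻ v in 𝕀, kernelOpNorm F * hg.mk g v :=
        setLIntegral_mono (hg'.const_mul _) fun v hv => by
          gcongr; exact lintegral_abs_le_kernelOpNorm hv
    _ = kernelOpNorm F * ∫⁻ v in 𝕀, hg.mk g v := lintegral_const_mul _ hg'

end AbsKernel

section Iterates

variable {F : ℝ → ℝ → ℝ}

lemma aemeasurable_iterate_absKernelApply (hF : Measurable (Function.uncurry F))
    {g : ℝ → ℝ≥0∞} (hg : AEMeasurable g (volume.restrict 𝕀)) :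
    ∀ n, AEMeasurable ((absKernelApply F)^[n] g) (volume.restrict 𝕀)
  | 0 => hg
  | n + 1 => by
    rw [Function.iterate_succ_apply']
    exact (measurable_absKernelApply hF (aemeasurable_iterate_absKernelApply hF hg n)).aemeasurable

lemma iterate_absKernelApply_add (hF : Measurable (Function.uncurry F)) {g : ℝ → ℝ≥0∞}
    (hg : AEMeasurable g (volume.restrict 𝕀)) (h : ℝ → ℝ≥0∞) (n : ℕ) :
    (absKernelApply F)^[n] (g + h) = (absKernelApply F)^[n] g + (absKernelApply F)^[n] h := by
  induction n with
  | zero => rfl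
  | succ n ih =>
    simp only [Function.iterate_succ_apply', ih]
    exact absKernelApply_add hF (aemeasurable_iterate_absKernelApply hF hg n) _

lemma iterate_absKernelApply_mono_ae {g h : ℝ → ℝ≥0∞} (hgh : g ≤ᵐ[volume.restrict 𝕀] h) :
    ∀ n, (absKernelApply F)^[n] g ≤ᵐ[volume.restrict 𝕀] (absKernelApply F)^[n] h
  | 0 => hgh
  | n + 1 => by
    simp only [Function.iterate_succ_apply']
    exact .of_forall (absKernelApply_mono_ae (iterate_absKernelApply_mono_ae hgh n))

lemma lintegral_iterate_absKernelApply_le (hF : Measurable (Function.uncurry F))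
    (hop : kernelOpNorm F ≤ 1) {g : ℝ → ℝ≥0∞} (hg : AEMeasurable g (volume.restrict 𝕀)) :
    ∀ n, ∫⁻ u in 𝕀, (absKernelApply F)^[n] g u ≤ ∫⁻ u in 𝕀, g u
  | 0 => le_rfl
  | n + 1 => by
    rw [Function.iterate_succ_apply']
    calc _ ≤ kernelOpNorm F * ∫⁻ u in 𝕀, (absKernelApply F)^[n] g u :=
          lintegral_absKernelApply_le hF (aemeasurable_iterate_absKernelApply hF hg n)
      _ ≤ 1 * ∫⁻ u in 𝕀, g u := mul_le_mul' hop (lintegral_iterate_absKernelApply_le hF hop hg n)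
      _ = _ := one_mul _

lemma measurable_absKernelIter (hF : Measurable (Function.uncurry F)) :
    ∀ n, Measurable (Function.uncurry (absKernelIter F n))
  | 0 => hF.abs.ennreal_ofReal
  | n + 1 =>
    ((hF.comp (measurable_fst.fst.prodMk measurable_snd)).abs.ennreal_ofReal.mul
      ((measurable_absKernelIter hF n).comp
        (measurable_snd.prodMk measurable_fst.snd))).lintegral_prod_right'

lemma measurable_kernelIter (hF : Measurable (Function.uncurry F)) :
    ∀ n, Measurable (Function.uncurry (kernelIter F n))
  | 0 => hF
  | n + 1 =>
    ((hF.comp (measurable_fst.fst.prodMk measurable_snd)).mul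
      ((measurable_kernelIter hF n).comp (measurable_snd.prodMk measurable_fst.snd))
      ).stronglyMeasurable.integral_prod_right'.measurable

lemma kernelIter_nonneg (hnn : ∀ u ∈ 𝕀, ∀ v ∈ 𝕀, 0 ≤ F u v) :
    ∀ n, ∀ u ∈ 𝕀, ∀ v ∈ 𝕀, 0 ≤ kernelIter F n u v
  | 0 => hnn
  | n + 1 => fun u hu v hv => setIntegral_nonneg measurableSet_Icc fun w hw =>
    mul_nonneg (hnn u hu w hw) (kernelIter_nonneg hnn n w hw v hv)

lemma lintegral_absKernelIter_le_one (hF : Measurable (Function.uncurry F))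
    (hop : kernelOpNorm F ≤ 1) {v : ℝ} (hv : v ∈ 𝕀) :
    ∀ n, ∫⁻ u in 𝕀, absKernelIter F n u v ≤ 1
  | 0 => (lintegral_abs_le_kernelOpNorm hv).trans hop
  | n + 1 =>
    calc ∫⁻ u in 𝕀, absKernelApply F (absKernelIter F n · v) u
        ≤ kernelOpNorm F * ∫⁻ w in 𝕀, absKernelIter F n w v :=
          lintegral_absKernelApply_le hF
            ((measurable_absKernelIter hF n).comp measurable_prodMk_right).aemeasurable
      _ ≤ 1 * 1 := by
          gcongr
          exact lintegral_absKernelIter_le_one hF hop hv n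
      _ = 1 := one_mul 1

/-- The Bochner integrals defining `kernelIter` are finite because `∫ |F|^(n) (u, v) du ≤ 1`. -/
lemma absKernelIter_ae_eq (hF : Measurable (Function.uncurry F))
    (hnn : ∀ u ∈ 𝕀, ∀ v ∈ 𝕀, 0 ≤ F u v) (hop : kernelOpNorm F ≤ 1) {v : ℝ} (hv : v ∈ 𝕀) :
    ∀ n, ∀ᵐ u ∂volume.restrict 𝕀, absKernelIter F n u v = ENNReal.ofReal (kernelIter F n u v)
  | 0 => ae_restrict_of_forall_mem measurableSet_Icc fun u hu => by
    simp only [absKernelIter, kernelIter, abs_of_nonneg (hnn u hu v hv)]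
  | n + 1 => by
    have hfin : ∀ᵐ u ∂volume.restrict 𝕀, absKernelIter F (n + 1) u v < ⊤ :=
      ae_lt_top ((measurable_absKernelIter hF (n + 1)).comp measurable_prodMk_right)
        ((lintegral_absKernelIter_le_one hF hop hv (n + 1)).trans_lt ENNReal.one_lt_top).ne
    filter_upwards [hfin, ae_restrict_mem measurableSet_Icc] with u hu_fin hu
    have hprod : absKernelIter F (n + 1) u v
        = ∫⁻ w in 𝕀, ENNReal.ofReal (F u w * kernelIter F n w v) := by
      refine lintegral_congr_ae ?_
      filter_upwards [absKernelIter_ae_eq hF hnn hop hv n,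
        ae_restrict_mem measurableSet_Icc] with w hw hwI
      rw [hw, abs_of_nonneg (hnn u hu w hwI), ← ENNReal.ofReal_mul (hnn u hu w hwI)]
    simp only [kernelIter, kernelComp]
    rw [integral_eq_lintegral_of_nonneg_ae, ← hprod, ENNReal.ofReal_toReal hu_fin.ne]
    · exact ae_restrict_of_forall_mem measurableSet_Icc fun w hw =>
        mul_nonneg (hnn u hu w hw) (kernelIter_nonneg hnn n w hw v hv)
    · exact ((hF.comp measurable_prodMk_left).mul
        ((measurable_kernelIter hF n).comp measurable_prodMk_right)).aestronglyMeasurable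

lemma lintegral_absKernelIter_le_kernelOpNorm (hF : Measurable (Function.uncurry F))
    (hnn : ∀ u ∈ 𝕀, ∀ v ∈ 𝕀, 0 ≤ F u v) (hop : kernelOpNorm F ≤ 1) {v : ℝ} (hv : v ∈ 𝕀)
    (n : ℕ) : ∫⁻ u in 𝕀, absKernelIter F n u v ≤ kernelOpNorm (kernelIter F n) := by
  rw [lintegral_congr_ae (absKernelIter_ae_eq hF hnn hop hv n)]
  exact (lintegral_mono fun u => ENNReal.ofReal_le_ofReal (le_abs_self _)).trans
    (lintegral_abs_le_kernelOpNorm hv)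

lemma iterate_succ_absKernelApply_eq (hF : Measurable (Function.uncurry F)) {g : ℝ → ℝ≥0∞}
    (hg : Measurable g) (n : ℕ) (u : ℝ) :
    (absKernelApply F)^[n + 1] g u = ∫⁻ v in 𝕀, absKernelIter F n u v * g v := by
  induction n generalizing u with
  | zero => rfl
  | succ n ih =>
    have hFu : Measurable fun w => ENNReal.ofReal |F u w| :=
      (hF.comp measurable_prodMk_left).abs.ennreal_ofReal
    calc (absKernelApply F)^[n + 2] g u
        = ∫⁻ w in 𝕀, ∫⁻ v in 𝕀, ENNReal.ofReal |F u w| * (absKernelIter F n w v * g v) := by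
          rw [Function.iterate_succ_apply']
          refine lintegral_congr fun w => ?_
          rw [ih, lintegral_const_mul' _ _ ENNReal.ofReal_ne_top]
      _ = ∫⁻ v in 𝕀, ∫⁻ w in 𝕀, ENNReal.ofReal |F u w| * absKernelIter F n w v * g v := by
          simp_rw [← mul_assoc]
          exact lintegral_lintegral_swap (((hFu.comp measurable_fst).mul
            (measurable_absKernelIter hF n)).mul (hg.comp measurable_snd)).aemeasurable
      _ = ∫⁻ v in 𝕀, absKernelIter F (n + 1) u v * g v :=
          lintegral_congr fun v => lintegral_mul_const _
            (hFu.mul ((measurable_absKernelIter hF n).comp measurable_prodMk_right))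

lemma lintegral_iterate_succ_absKernelApply_le (hF : Measurable (Function.uncurry F))
    (hnn : ∀ u ∈ 𝕀, ∀ v ∈ 𝕀, 0 ≤ F u v) (hop : kernelOpNorm F ≤ 1) {g : ℝ → ℝ≥0∞}
    (hg : AEMeasurable g (volume.restrict 𝕀)) (n : ℕ) :
    ∫⁻ u in 𝕀, (absKernelApply F)^[n + 1] g u
      ≤ kernelOpNorm (kernelIter F n) * ∫⁻ v in 𝕀, g v := by
  have hmk : (absKernelApply F)^[n + 1] g = (absKernelApply F)^[n + 1] (hg.mk g) := by
    rw [Function.iterate_succ_apply, Function.iterate_succ_apply,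
      absKernelApply_congr_ae hg.ae_eq_mk]
  have hg' := hg.measurable_mk
  rw [hmk, lintegral_congr_ae hg.ae_eq_mk]
  calc ∫⁻ u in 𝕀, (absKernelApply F)^[n + 1] (hg.mk g) u
      = ∫⁻ v in 𝕀, (∫⁻ u in 𝕀, absKernelIter F n u v) * hg.mk g v := by
        simp_rw [iterate_succ_absKernelApply_eq hF hg' n]
        rw [lintegral_lintegral_swap
          ((measurable_absKernelIter hF n).mul (hg'.comp measurable_snd)).aemeasurable]
        exact lintegral_congr fun v => lintegral_mul_const _
          ((measurable_absKernelIter hF n).comp measurable_prodMk_right)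
    _ ≤ ∫⁻ v in 𝕀, kernelOpNorm (kernelIter F n) * hg.mk g v :=
        setLIntegral_mono (hg'.const_mul _) fun v hv => by
          gcongr; exact lintegral_absKernelIter_le_kernelOpNorm hF hnn hop hv n
    _ = kernelOpNorm (kernelIter F n) * ∫⁻ v in 𝕀, hg.mk g v := lintegral_const_mul _ hg'

lemma ae_le_sum_iterate_absKernelApply_add (hF : Measurable (Function.uncurry F))
    {d a : ℝ → ℝ≥0∞} (ha : AEMeasurable a (volume.restrict 𝕀))
    (h : d ≤ᵐ[volume.restrict 𝕀] a + absKernelApply F d) (n : ℕ) :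
    ∀ᵐ u ∂volume.restrict 𝕀,
      d u ≤ (∑ j ∈ Finset.range n, (absKernelApply F)^[j] a u) + (absKernelApply F)^[n] d u := by
  induction n with
  | zero => simp
  | succ n ih =>
    have hstep := iterate_absKernelApply_mono_ae (F := F) h n
    rw [iterate_absKernelApply_add hF ha,
      ← Function.iterate_succ_apply (absKernelApply F)] at hstep
    filter_upwards [ih, hstep] with u hu hstep_u
    rw [Finset.sum_range_succ, add_assoc]
    exact hu.trans (add_le_add_right hstep_u _)

end Iterates

theorem IsReflKernel.lintegral_le_of_ae_le {F : ℝ → ℝ → ℝ} {γ : ℝ} {k : ℕ}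
    (hF : IsReflKernel F γ k) {d a : ℝ → ℝ≥0∞} (hd : AEMeasurable d (volume.restrict 𝕀))
    (ha : AEMeasurable a (volume.restrict 𝕀))
    (h : d ≤ᵐ[volume.restrict 𝕀] a + absKernelApply F d) (hfin : ∫⁻ u in 𝕀, d u ≠ ⊤) :
    ∫⁻ u in 𝕀, d u ≤ ENNReal.ofReal (k / (1 - γ)) * ∫⁻ u in 𝕀, a u := by
  have hKa := aemeasurable_iterate_absKernelApply hF.meas ha
  have hk : k = k - 1 + 1 := (Nat.sub_add_cancel hF.k_pos).symm
  refine ENNReal.le_ofReal_div_one_sub_mul_of_le hF.gamma_mem.1.le hF.gamma_mem.2 hfin ?_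
  calc ∫⁻ u in 𝕀, d u
      ≤ ∫⁻ u in 𝕀, ((∑ j ∈ Finset.range k, (absKernelApply F)^[j] a u)
          + (absKernelApply F)^[k] d u) := lintegral_mono_ae
          (ae_le_sum_iterate_absKernelApply_add hF.meas ha h k)
    _ = (∑ j ∈ Finset.range k, ∫⁻ u in 𝕀, (absKernelApply F)^[j] a u)
          + ∫⁻ u in 𝕀, (absKernelApply F)^[k] d u := by
        rw [lintegral_add_left' (Finset.aemeasurable_fun_sum _ fun j _ => hKa j),
          lintegral_finsetSum' _ fun j _ => hKa j]
    _ ≤ (∑ _j ∈ Finset.range k, ∫⁻ u in 𝕀, a u)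
          + kernelOpNorm (kernelIter F (k - 1)) * ∫⁻ u in 𝕀, d u := by
        refine add_le_add (Finset.sum_le_sum fun j _ =>
          lintegral_iterate_absKernelApply_le hF.meas hF.opNorm_le_one ha j) ?_
        rw [hk]
        exact lintegral_iterate_succ_absKernelApply_le hF.meas hF.nonneg hF.opNorm_le_one hd _
    _ ≤ ENNReal.ofReal k * (∫⁻ u in 𝕀, a u) + ENNReal.ofReal γ * ∫⁻ u in 𝕀, d u := by
        rw [Finset.sum_const, Finset.card_range, nsmul_eq_mul, ENNReal.ofReal_natCast]
        gcongr
        exact hF.iter_le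

section PathSup

variable {T : ℝ} {f g : ℝ → ℝ → ℝ}

lemma le_pathSup {u t : ℝ} (ht : t ∈ Icc 0 T) : ENNReal.ofReal |f u t| ≤ pathSup T f u :=
  le_biSup (fun t => ENNReal.ofReal |f u t|) ht

lemma pathSup_sub_le (u : ℝ) : pathSup T (f - g) u ≤ pathSup T f u + pathSup T g u :=
  iSup₂_le fun t ht => by
    rw [Pi.sub_apply, Pi.sub_apply, sub_eq_add_neg]
    exact (ENNReal.ofReal_abs_add_le _ _).trans
      (add_le_add (le_pathSup ht) ((abs_neg (g u t)).symm ▸ le_pathSup ht))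

lemma pathSup_eq_biSup_rat {u : ℝ}
    (hf : ∀ t ∈ Ico 0 T, ContinuousWithinAt (f u) (Ici t) t) :
    pathSup T f u
      = ⨆ t ∈ insert T (range ((↑) : ℚ → ℝ)) ∩ Icc 0 T, ENNReal.ofReal |f u t| := by
  refine le_antisymm (iSup₂_le fun t ht => ?_) (biSup_mono fun t ht => ht.2)
  rcases ht.2.eq_or_lt with rfl | htT
  · exact le_biSup (fun t => ENNReal.ofReal |f u t|) ⟨mem_insert _ _, ht⟩
  have hcl : t ∈ closure (Ioo t T ∩ range ((↑) : ℚ → ℝ)) :=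
    closure_minimal (Rat.denseRange_cast.open_subset_closure_inter isOpen_Ioo) isClosed_closure
      (by rw [closure_Ioo htT.ne]; exact left_mem_Icc.2 htT.le)
  refine ContinuousWithinAt.closure_le (f := fun s => ENNReal.ofReal |f u s|) hcl ?_
    continuousWithinAt_const fun s hs => ?_
  · exact (ENNReal.continuous_ofReal.comp continuous_abs).continuousAt.comp_continuousWithinAt
      ((hf t ⟨ht.1, htT⟩).mono fun s hs => hs.1.1.le)
  · exact le_biSup (fun t => ENNReal.ofReal |f u t|)
      ⟨mem_insert_of_mem _ hs.2, ht.1.trans hs.1.1.le, hs.1.2.le⟩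

lemma MemDT.aemeasurable_pathSup (hf : MemDT T f) :
    AEMeasurable (pathSup T f) (volume.restrict 𝕀) :=
  ⟨_, Measurable.biSup _ (((countable_range _).insert T).mono inter_subset_left)
      fun t ht => (hf.meas t ht.2).abs.ennreal_ofReal,
    ae_restrict_of_forall_mem measurableSet_Icc fun u hu =>
      pathSup_eq_biSup_rat (hf.rightCont u hu)⟩

lemma MemDT.TNorm_sub_le (hf : MemDT T f) : TNorm T (f - g) ≤ TNorm T f + TNorm T g :=
  (lintegral_mono fun u => pathSup_sub_le u).trans_eq
    (lintegral_add_left' hf.aemeasurable_pathSup _)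

lemma MemDT.sub (hf : MemDT T f) (hg : MemDT T g) : MemDT T (f - g) where
  rightCont u hu t ht := (hf.rightCont u hu t ht).sub (hg.rightCont u hu t ht)
  leftLim u hu t ht :=
    let ⟨a, ha⟩ := hf.leftLim u hu t ht
    let ⟨b, hb⟩ := hg.leftLim u hu t ht
    ⟨a - b, ha.sub hb⟩
  meas t ht := (hf.meas t ht).sub (hg.meas t ht)
  finite := (hf.TNorm_sub_le.trans_lt
    (ENNReal.add_lt_top.2 ⟨hf.finite.lt_top, hg.finite.lt_top⟩)).ne

lemma MemDT.ae_pathSup_ne_top (hf : MemDT T f) : ∀ᵐ u ∂volume.restrict 𝕀, pathSup T f u ≠ ⊤ :=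
  (ae_lt_top' hf.aemeasurable_pathSup hf.finite).mono fun _ hu => hu.ne

end PathSup

section Pointwise

lemma ofReal_iSup_max_zero_le {ι : Sort*} {g : ι → ℝ} {B : ℝ≥0∞}
    (h : ∀ i, ENNReal.ofReal (g i) ≤ B) : ENNReal.ofReal (⨆ i, max (g i) 0) ≤ B := by
  rcases eq_or_ne B ⊤ with rfl | hB
  · exact le_top
  rw [← ENNReal.ofReal_toReal hB]
  exact ENNReal.ofReal_le_ofReal <| Real.iSup_le
    (fun i => max_le ((ENNReal.ofReal_le_iff_le_toReal hB).1 (h i)) ENNReal.toReal_nonneg)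
    ENNReal.toReal_nonneg

lemma iSup_max_zero_le_add {ι : Sort*} {g₁ g₂ : ι → ℝ} {c : ℝ} (hc : 0 ≤ c)
    (hbdd : BddAbove (range g₁)) (h : ∀ i, g₂ i ≤ g₁ i + c) :
    ⨆ i, max (g₂ i) 0 ≤ (⨆ i, max (g₁ i) 0) + c := by
  obtain ⟨M, hM⟩ := hbdd
  have hbdd' : BddAbove (range fun i => max (g₁ i) 0) :=
    ⟨max M 0, forall_mem_range.2 fun i => max_le_max (hM ⟨i, rfl⟩) le_rfl⟩
  refine Real.iSup_le (fun i => ?_)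
    (add_nonneg (Real.iSup_nonneg fun _ => le_max_right _ _) hc)
  calc max (g₂ i) 0 ≤ max (g₁ i) 0 + c :=
        max_le ((h i).trans (by gcongr; exact le_max_left _ _)) (by positivity)
    _ ≤ _ := by gcongr; exact le_ciSup hbdd' i

lemma ofReal_abs_iSup_max_zero_sub_le {ι : Sort*} {g₁ g₂ : ι → ℝ} {c : ℝ≥0∞}
    (hbdd : BddAbove (range g₁)) (h : ∀ i, ENNReal.ofReal |g₂ i - g₁ i| ≤ c) :
    ENNReal.ofReal |(⨆ i, max (g₂ i) 0) - ⨆ i, max (g₁ i) 0| ≤ c := by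
  rcases eq_or_ne c ⊤ with rfl | hc
  · exact le_top
  have h' i : |g₂ i - g₁ i| ≤ c.toReal := (ENNReal.ofReal_le_iff_le_toReal hc).1 (h i)
  have hbdd₂ : BddAbove (range g₂) := by
    obtain ⟨M, hM⟩ := hbdd
    exact ⟨M + c.toReal, forall_mem_range.2 fun i =>
      by linarith [hM ⟨i, rfl⟩, (abs_le.1 (h' i)).2]⟩
  have h₂₁ : ⨆ i, max (g₂ i) 0 ≤ (⨆ i, max (g₁ i) 0) + c.toReal :=
    iSup_max_zero_le_add ENNReal.toReal_nonneg hbdd fun i => by linarith [(abs_le.1 (h' i)).2]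
  have h₁₂ : ⨆ i, max (g₁ i) 0 ≤ (⨆ i, max (g₂ i) 0) + c.toReal :=
    iSup_max_zero_le_add ENNReal.toReal_nonneg hbdd₂ fun i => by linarith [(abs_le.1 (h' i)).1]
  rw [← ENNReal.ofReal_toReal hc]
  exact ENNReal.ofReal_le_ofReal (abs_sub_le_iff.2 ⟨by linarith, by linarith⟩)

variable {T u s : ℝ} {F F₁ F₂ X X₁ X₂ Y Y₁ Y₂ : ℝ → ℝ → ℝ}

lemma lintegral_enorm_mul_le_absKernelApply (hs : s ∈ Icc 0 T) :
    ∫⁻ v in 𝕀, ‖F u v * Y v s‖ₑ ≤ absKernelApply F (pathSup T Y) u :=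
  lintegral_mono fun v => by
    rw [enorm_mul, Real.enorm_eq_ofReal_abs, Real.enorm_eq_ofReal_abs]
    gcongr
    exact le_pathSup hs

lemma ofReal_abs_kernelApply_le (hs : s ∈ Icc 0 T) :
    ENNReal.ofReal |kernelApply F Y u s| ≤ absKernelApply F (pathSup T Y) u := by
  rw [← Real.enorm_eq_ofReal_abs]
  exact (enorm_integral_le_lintegral_enorm _).trans (lintegral_enorm_mul_le_absKernelApply hs)

lemma integrable_mul_of_absKernelApply_ne_top (hs : s ∈ Icc 0 T) (hF : Measurable (F u))
    (hY : Measurable fun v => Y v s) (hfin : absKernelApply F (pathSup T Y) u ≠ ⊤) :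
    Integrable (fun v => F u v * Y v s) (volume.restrict 𝕀) :=
  ⟨(hF.mul hY).aestronglyMeasurable, hasFiniteIntegral_iff_enorm.2
    ((lintegral_enorm_mul_le_absKernelApply hs).trans_lt hfin.lt_top)⟩

lemma ofReal_neg_add_kernelApply_le (hs : s ∈ Icc 0 T) :
    ENNReal.ofReal (-X u s + kernelApply F Y u s)
      ≤ pathSup T X u + absKernelApply F (pathSup T Y) u :=
  (ENNReal.ofReal_le_ofReal (le_abs_self _)).trans <|
    (ENNReal.ofReal_abs_add_le _ _).trans <|
      add_le_add ((abs_neg (X u s)).symm ▸ le_pathSup hs) (ofReal_abs_kernelApply_le hs)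

lemma ofReal_abs_kernelApply_sub_le (hs : s ∈ Icc 0 T) (hF₁ : Measurable (F₁ u))
    (hF₂ : Measurable (F₂ u)) (hY₁ : Measurable fun v => Y₁ v s)
    (hY₂ : Measurable fun v => Y₂ v s) (hK₁ : absKernelApply F₁ (pathSup T Y₁) u ≠ ⊤) :
    ENNReal.ofReal |kernelApply F₂ Y₂ u s - kernelApply F₁ Y₁ u s|
      ≤ absKernelApply (F₂ - F₁) (pathSup T Y₁) u
        + absKernelApply F₂ (pathSup T (Y₂ - Y₁)) u := by
  rcases eq_or_ne (absKernelApply (F₂ - F₁) (pathSup T Y₁) u) ⊤ with hΔ | hΔ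
  · simp [hΔ]
  rcases eq_or_ne (absKernelApply F₂ (pathSup T (Y₂ - Y₁)) u) ⊤ with h₂ | h₂
  · simp [h₂]
  have i₁ := integrable_mul_of_absKernelApply_ne_top hs hF₁ hY₁ hK₁
  have iΔ := integrable_mul_of_absKernelApply_ne_top hs (hF₂.sub hF₁) hY₁ hΔ
  have i₂ := integrable_mul_of_absKernelApply_ne_top hs hF₂ (hY₂.sub hY₁) h₂
  have hsplit : kernelApply F₂ Y₂ u s - kernelApply F₁ Y₁ u s
      = kernelApply (F₂ - F₁) Y₁ u s + kernelApply F₂ (Y₂ - Y₁) u s := by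
    rw [sub_eq_iff_eq_add]
    calc kernelApply F₂ Y₂ u s
        = ∫ v in 𝕀, ((F₂ - F₁) u v * Y₁ v s + F₂ u v * (Y₂ - Y₁) v s) + F₁ u v * Y₁ v s :=
          integral_congr_ae (.of_forall fun v => by simp only [Pi.sub_apply]; ring)
      _ = _ := by
          rw [integral_add (f := fun v => (F₂ - F₁) u v * Y₁ v s + F₂ u v * (Y₂ - Y₁) v s)
            (iΔ.add i₂) i₁, integral_add iΔ i₂]
          rfl
  rw [hsplit]
  exact (ENNReal.ofReal_abs_add_le _ _).trans
    (add_le_add (ofReal_abs_kernelApply_le hs) (ofReal_abs_kernelApply_le hs))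

end Pointwise

/-- `Φ_F(X)`, where `Y` stands for `Ψ_F(X)`. -/
noncomputable def reflectedProcess (X F Y : ℝ → ℝ → ℝ) : ℝ → ℝ → ℝ :=
  fun u t => X u t + Y u t - kernelApply F Y u t

section Regulator

variable {T γ u : ℝ} {k : ℕ} {F F₁ F₂ X X₁ X₂ Y Y₁ Y₂ : ℝ → ℝ → ℝ}

lemma pathSup_le_of_eq_piMap (hfix : ∀ t ∈ Icc 0 T, Y u t = piMap X F Y u t) :
    pathSup T Y u ≤ pathSup T X u + absKernelApply F (pathSup T Y) u :=
  iSup₂_le fun t ht => by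
    rw [hfix t ht]
    unfold piMap
    rw [abs_of_nonneg (Real.iSup_nonneg fun _ => le_max_right _ _)]
    exact ofReal_iSup_max_zero_le fun s =>
      ofReal_neg_add_kernelApply_le ⟨s.2.1, s.2.2.trans ht.2⟩

lemma pathSup_sub_le_of_eq_piMap (hfix₁ : ∀ t ∈ Icc 0 T, Y₁ u t = piMap X₁ F₁ Y₁ u t)
    (hfix₂ : ∀ t ∈ Icc 0 T, Y₂ u t = piMap X₂ F₂ Y₂ u t)
    (hF₁ : Measurable (F₁ u)) (hF₂ : Measurable (F₂ u))
    (hY₁ : ∀ s ∈ Icc 0 T, Measurable fun v => Y₁ v s)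
    (hY₂ : ∀ s ∈ Icc 0 T, Measurable fun v => Y₂ v s)
    (hX₁ : pathSup T X₁ u ≠ ⊤) (hK₁ : absKernelApply F₁ (pathSup T Y₁) u ≠ ⊤) :
    pathSup T (Y₂ - Y₁) u ≤ pathSup T (X₂ - X₁) u + absKernelApply (F₂ - F₁) (pathSup T Y₁) u
      + absKernelApply F₂ (pathSup T (Y₂ - Y₁)) u := by
  refine iSup₂_le fun t ht => ?_
  have hsT (s : Icc 0 t) : s.1 ∈ Icc 0 T := ⟨s.2.1, s.2.2.trans ht.2⟩
  have hbdd : BddAbove (range fun s : Icc 0 t => -X₁ u s + kernelApply F₁ Y₁ u s) :=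
    ⟨_, forall_mem_range.2 fun s => (ENNReal.ofReal_le_iff_le_toReal
      (ENNReal.add_ne_top.2 ⟨hX₁, hK₁⟩)).1 (ofReal_neg_add_kernelApply_le (hsT s))⟩
  rw [Pi.sub_apply, Pi.sub_apply, hfix₁ t ht, hfix₂ t ht]
  unfold piMap
  refine ofReal_abs_iSup_max_zero_sub_le hbdd fun s => ?_
  calc ENNReal.ofReal |(-X₂ u s + kernelApply F₂ Y₂ u s) - (-X₁ u s + kernelApply F₁ Y₁ u s)|
      = ENNReal.ofReal |-(X₂ - X₁) u s + (kernelApply F₂ Y₂ u s - kernelApply F₁ Y₁ u s)| := by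
        rw [Pi.sub_apply, Pi.sub_apply]; ring_nf
    _ ≤ _ := (ENNReal.ofReal_abs_add_le _ _).trans <| by
        rw [add_assoc, abs_neg]
        exact add_le_add (le_pathSup (hsT s)) (ofReal_abs_kernelApply_sub_le (hsT s) hF₁ hF₂
          (hY₁ _ (hsT s)) (hY₂ _ (hsT s)) hK₁)

lemma pathSup_reflectedProcess_sub_le (hF₁ : Measurable (F₁ u)) (hF₂ : Measurable (F₂ u))
    (hY₁ : ∀ s ∈ Icc 0 T, Measurable fun v => Y₁ v s)
    (hY₂ : ∀ s ∈ Icc 0 T, Measurable fun v => Y₂ v s)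
    (hK₁ : absKernelApply F₁ (pathSup T Y₁) u ≠ ⊤) :
    pathSup T (reflectedProcess X₂ F₂ Y₂ - reflectedProcess X₁ F₁ Y₁) u
      ≤ pathSup T (X₂ - X₁) u + pathSup T (Y₂ - Y₁) u
        + (absKernelApply (F₂ - F₁) (pathSup T Y₁) u
          + absKernelApply F₂ (pathSup T (Y₂ - Y₁)) u) :=
  iSup₂_le fun s hs => by
    have hsplit : (reflectedProcess X₂ F₂ Y₂ - reflectedProcess X₁ F₁ Y₁) u s
        = ((X₂ - X₁) u s + (Y₂ - Y₁) u s) + -(kernelApply F₂ Y₂ u s - kernelApply F₁ Y₁ u s) := by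
      simp only [reflectedProcess, Pi.sub_apply]; ring
    rw [hsplit]
    refine (ENNReal.ofReal_abs_add_le _ _).trans (add_le_add ((ENNReal.ofReal_abs_add_le _ _).trans
      (add_le_add (le_pathSup hs) (le_pathSup hs))) ?_)
    rw [abs_neg]
    exact ofReal_abs_kernelApply_sub_le hs hF₁ hF₂ (hY₁ s hs) (hY₂ s hs) hK₁

lemma MemDT.ae_absKernelApply_pathSup_ne_top (hY : MemDT T Y)
    (hF : Measurable (Function.uncurry F)) (hop : kernelOpNorm F ≠ ⊤) :
    ∀ᵐ u ∂volume.restrict 𝕀, absKernelApply F (pathSup T Y) u ≠ ⊤ :=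
  (ae_lt_top (measurable_absKernelApply hF hY.aemeasurable_pathSup)
    ((lintegral_absKernelApply_le hF hY.aemeasurable_pathSup).trans_lt
      (ENNReal.mul_lt_top hop.lt_top hY.finite.lt_top)).ne).mono fun _ hu => hu.ne

theorem IsRegulator.TNorm_le (hF : IsReflKernel F γ k) (hX : MemDT T X)
    (hY : IsRegulator T X F Y) : TNorm T Y ≤ ENNReal.ofReal (k / (1 - γ)) * TNorm T X :=
  hF.lintegral_le_of_ae_le hY.1.memDT.aemeasurable_pathSup hX.aemeasurable_pathSup
    (ae_restrict_of_forall_mem measurableSet_Icc fun u hu => pathSup_le_of_eq_piMap (hY.2 u hu))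
    hY.1.memDT.finite

theorem TNorm_sub_le_of_isRegulator (hF₁ : Measurable (Function.uncurry F₁))
    (hF₁op : kernelOpNorm F₁ ≠ ⊤) (hF₂ : IsReflKernel F₂ γ k) (hX₁ : MemDT T X₁)
    (hX₂ : MemDT T X₂) (hY₁ : IsRegulator T X₁ F₁ Y₁) (hY₂ : IsRegulator T X₂ F₂ Y₂) :
    TNorm T (Y₂ - Y₁) ≤ ENNReal.ofReal (k / (1 - γ))
      * (TNorm T (X₂ - X₁) + kernelOpNorm (F₂ - F₁) * TNorm T Y₁) := by
  have hΔF : Measurable (Function.uncurry (F₂ - F₁)) := hF₂.meas.sub hF₁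
  have hpY₁ := hY₁.1.memDT.aemeasurable_pathSup
  have hΔY := hY₂.1.memDT.sub hY₁.1.memDT
  refine (hF₂.lintegral_le_of_ae_le hΔY.aemeasurable_pathSup
    ((hX₂.sub hX₁).aemeasurable_pathSup.add (measurable_absKernelApply hΔF hpY₁).aemeasurable)
    ?_ hΔY.finite).trans ?_
  · filter_upwards [ae_restrict_mem measurableSet_Icc, hX₁.ae_pathSup_ne_top,
      hY₁.1.memDT.ae_absKernelApply_pathSup_ne_top hF₁ hF₁op] with u hu hX₁u hK₁u
    exact pathSup_sub_le_of_eq_piMap (hY₁.2 u hu) (hY₂.2 u hu)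
      (hF₁.comp measurable_prodMk_left) (hF₂.meas.comp measurable_prodMk_left)
      hY₁.1.memDT.meas hY₂.1.memDT.meas hX₁u hK₁u
  · simp only [Pi.add_apply]
    rw [lintegral_add_left' (hX₂.sub hX₁).aemeasurable_pathSup]
    exact mul_le_mul_right (add_le_add le_rfl (lintegral_absKernelApply_le hΔF hpY₁)) _

theorem TNorm_reflectedProcess_sub_le (hF₁ : Measurable (Function.uncurry F₁))
    (hF₁op : kernelOpNorm F₁ ≠ ⊤) (hF₂ : Measurable (Function.uncurry F₂))
    (hF₂op : kernelOpNorm F₂ ≤ 1) (hX₁ : MemDT T X₁) (hX₂ : MemDT T X₂) (hY₁ : MemDT T Y₁)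
    (hY₂ : MemDT T Y₂) :
    TNorm T (reflectedProcess X₂ F₂ Y₂ - reflectedProcess X₁ F₁ Y₁)
      ≤ TNorm T (X₂ - X₁) + 2 * TNorm T (Y₂ - Y₁) + kernelOpNorm (F₂ - F₁) * TNorm T Y₁ := by
  have hΔF : Measurable (Function.uncurry (F₂ - F₁)) := hF₂.sub hF₁
  have hpΔX := (hX₂.sub hX₁).aemeasurable_pathSup
  have hpΔY := (hY₂.sub hY₁).aemeasurable_pathSup
  have hKΔ := measurable_absKernelApply hΔF hY₁.aemeasurable_pathSup
  calc TNorm T (reflectedProcess X₂ F₂ Y₂ - reflectedProcess X₁ F₁ Y₁)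
      ≤ ∫⁻ u in 𝕀, (pathSup T (X₂ - X₁) u + pathSup T (Y₂ - Y₁) u
          + (absKernelApply (F₂ - F₁) (pathSup T Y₁) u
            + absKernelApply F₂ (pathSup T (Y₂ - Y₁)) u)) := by
        refine lintegral_mono_ae ?_
        filter_upwards [hY₁.ae_absKernelApply_pathSup_ne_top hF₁ hF₁op] with u hK₁u
        exact pathSup_reflectedProcess_sub_le (hF₁.comp measurable_prodMk_left)
          (hF₂.comp measurable_prodMk_left) hY₁.meas hY₂.meas hK₁u
    _ = TNorm T (X₂ - X₁) + TNorm T (Y₂ - Y₁) + ((∫⁻ u in 𝕀, absKernelApply (F₂ - F₁)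
          (pathSup T Y₁) u) + ∫⁻ u in 𝕀, absKernelApply F₂ (pathSup T (Y₂ - Y₁)) u) := by
        rw [lintegral_add_left' (f := fun u => pathSup T (X₂ - X₁) u + pathSup T (Y₂ - Y₁) u)
            (hpΔX.add hpΔY), lintegral_add_left' hpΔX,
          lintegral_add_left' hKΔ.aemeasurable]
        rfl
    _ ≤ TNorm T (X₂ - X₁) + TNorm T (Y₂ - Y₁)
          + (kernelOpNorm (F₂ - F₁) * TNorm T Y₁ + 1 * TNorm T (Y₂ - Y₁)) := by
        gcongr
        · exact lintegral_absKernelApply_le hΔF hY₁.aemeasurable_pathSup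
        · exact (lintegral_absKernelApply_le hF₂ hpΔY).trans (mul_le_mul_left hF₂op _)
    _ = _ := by ring

end Regulator

theorem reflection_map_joint_lipschitz_general
    (T : ℝ) (F1 F2 : ℝ → ℝ → ℝ) (γ1 γ2 : ℝ) (k1 k2 : ℕ)
    (hF1 : IsReflKernel F1 γ1 k1) (hF2 : IsReflKernel F2 γ2 k2)
    (X1 X2 Y1 Y2 : ℝ → ℝ → ℝ) (hX1 : MemDT T X1) (hX2 : MemDT T X2)
    (hY1 : IsRegulator T X1 F1 Y1) (hY2 : IsRegulator T X2 F2 Y2) :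
    TNorm T (fun u t => Y2 u t - Y1 u t)
      ≤ ENNReal.ofReal ((k2 : ℝ) / (1 - γ2)) * TNorm T (fun u t => X2 u t - X1 u t)
        + ENNReal.ofReal ((k1 : ℝ) * k2 / ((1 - γ1) * (1 - γ2))) * TNorm T X1
            * kernelOpNorm (fun u v => F2 u v - F1 u v) ∧
    TNorm T (fun u t => (X2 u t + Y2 u t - kernelApply F2 Y2 u t)
        - (X1 u t + Y1 u t - kernelApply F1 Y1 u t))
      ≤ ENNReal.ofReal (1 + 2 * (k2 : ℝ) / (1 - γ2)) * TNorm T (fun u t => X2 u t - X1 u t)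
        + ENNReal.ofReal (2 * (k1 : ℝ) * k2 / ((1 - γ1) * (1 - γ2)) + (k1 : ℝ) / (1 - γ1))
            * TNorm T X1 * kernelOpNorm (fun u v => F2 u v - F1 u v) := by
  change TNorm T (Y2 - Y1) ≤ _ * TNorm T (X2 - X1) + _ * _ * kernelOpNorm (F2 - F1) ∧
    TNorm T (reflectedProcess X2 F2 Y2 - reflectedProcess X1 F1 Y1)
      ≤ _ * TNorm T (X2 - X1) + _ * _ * kernelOpNorm (F2 - F1)
  have hr₁ : 0 ≤ (k1 : ℝ) / (1 - γ1) := div_nonneg k1.cast_nonneg (by linarith [hF1.gamma_mem.2])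
  have hr₂ : 0 ≤ (k2 : ℝ) / (1 - γ2) := div_nonneg k2.cast_nonneg (by linarith [hF2.gamma_mem.2])
  rw [show (k1 : ℝ) * k2 / ((1 - γ1) * (1 - γ2)) = k2 / (1 - γ2) * (k1 / (1 - γ1)) by
      rw [div_eq_mul_inv, mul_inv]; ring,
    show 2 * (k1 : ℝ) * k2 / ((1 - γ1) * (1 - γ2)) = 2 * (k2 / (1 - γ2) * (k1 / (1 - γ1))) by
      rw [div_eq_mul_inv, mul_inv]; ring,
    mul_div_assoc, ENNReal.ofReal_add (by positivity) hr₁, ENNReal.ofReal_add zero_le_one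
      (by positivity), ENNReal.ofReal_mul zero_le_two, ENNReal.ofReal_mul zero_le_two,
    ENNReal.ofReal_mul hr₂, ENNReal.ofReal_one, ENNReal.ofReal_ofNat]
  set c₁ := ENNReal.ofReal (k1 / (1 - γ1))
  set c₂ := ENNReal.ofReal (k2 / (1 - γ2))
  set N := kernelOpNorm (F2 - F1)
  have hF1op : kernelOpNorm F1 ≠ ⊤ := ne_top_of_le_ne_top ENNReal.one_ne_top hF1.opNorm_le_one
  have hNY1 : N * TNorm T Y1 ≤ c₁ * TNorm T X1 * N := by
    rw [mul_comm]
    exact mul_le_mul_left (hY1.TNorm_le hF1 hX1) _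
  have hΔY : TNorm T (Y2 - Y1) ≤ c₂ * (TNorm T (X2 - X1) + c₁ * TNorm T X1 * N) :=
    (TNorm_sub_le_of_isRegulator hF1.meas hF1op hF2 hX1 hX2 hY1 hY2).trans (by gcongr)
  have hΔΦ := TNorm_reflectedProcess_sub_le hF1.meas hF1op hF2.meas hF2.opNorm_le_one hX1 hX2
    hY1.1.memDT hY2.1.memDT
  refine ⟨hΔY.trans_eq (by ring), hΔΦ.trans ?_⟩
  calc _ ≤ TNorm T (X2 - X1) + 2 * (c₂ * (TNorm T (X2 - X1) + c₁ * TNorm T X1 * N))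
        + c₁ * TNorm T X1 * N := by gcongr
    _ = _ := by ring

/-- joint Lipschitz continuity of the regulator and the reflected process in
both the free process and the reflection kernel. -/
theorem reflection_map_joint_lipschitz
    (T : ℝ) (hT : 0 < T) (F1 F2 : ℝ → ℝ → ℝ) (γ1 γ2 : ℝ) (k1 k2 : ℕ)
    (hF1 : IsReflKernel F1 γ1 k1) (hF2 : IsReflKernel F2 γ2 k2)
    (X1 X2 Y1 Y2 : ℝ → ℝ → ℝ) (hX1 : MemDT T X1) (hX2 : MemDT T X2)
    (hY1 : IsRegulator T X1 F1 Y1) (hY2 : IsRegulator T X2 F2 Y2) :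
    TNorm T (fun u t => Y2 u t - Y1 u t)
      ≤ ENNReal.ofReal ((k2 : ℝ) / (1 - γ2)) * TNorm T (fun u t => X2 u t - X1 u t)
        + ENNReal.ofReal ((k1 : ℝ) * k2 / ((1 - γ1) * (1 - γ2))) * TNorm T X1
            * kernelOpNorm (fun u v => F2 u v - F1 u v) ∧
    TNorm T (fun u t => (X2 u t + Y2 u t - kernelApply F2 Y2 u t)
        - (X1 u t + Y1 u t - kernelApply F1 Y1 u t))
      ≤ ENNReal.ofReal (1 + 2 * (k2 : ℝ) / (1 - γ2)) * TNorm T (fun u t => X2 u t - X1 u t)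
        + ENNReal.ofReal (2 * (k1 : ℝ) * k2 / ((1 - γ1) * (1 - γ2)) + (k1 : ℝ) / (1 - γ1))
            * TNorm T X1 * kernelOpNorm (fun u v => F2 u v - F1 u v) :=
  reflection_map_joint_lipschitz_general T F1 F2 γ1 γ2 k1 k2 hF1 hF2 X1 X2 Y1 Y2 hX1 hX2 hY1 hY2
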